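/- In the graph R_n, the rectangular faces can be 2-colored: the 4n² + 2n rectangles split into two sets S and T, each of size 2n² + n, such that any two rectangles in the same set are distant (share no common edge), and this partition is independent of the choice of starting rectangle. -/

import Mathlib

/-- The rectangles of the graph `R_n`: for each `i : Fin n` and
`j : ZMod (4n)` an inner rectangle between the `i`-th and `(i+1)`-th concentric
cycles, and for each `k : ZMod (2n)` an outer rectangle between the outermost
cycle and itself (determined by the outer edges `k` and `k + 1`, which join
antipodal vertices of the outermost cycle). -/
def Rect (n : ℕ) : Type := (Fin n × ZMod (4 * n)) ⊕ ZMod (2 * n)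

instance (n : ℕ) [NeZero n] : NeZero (4 * n) := ⟨by have := NeZero.ne n; omega⟩
instance (n : ℕ) [NeZero n] : NeZero (2 * n) := ⟨by have := NeZero.ne n; omega⟩

instance (n : ℕ) [NeZero n] : Fintype (Rect n) := by
  unfold Rect; infer_instance

instance (n : ℕ) [NeZero n] : DecidableEq (Rect n) := by
  unfold Rect; infer_instance

/-- Two rectangles of `R_n` are neighboured when they share a common edge:
two inner rectangles when they lie between the same pair of cycles in adjacent
positions (sharing a spoke) or in consecutive layers at the same position
(sharing a cycle edge); an inner rectangle of the top layer and an outer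
rectangle when they share a cycle edge of the outermost cycle; and two outer
rectangles when they share an outer edge. -/
def Neighbored (n : ℕ) : Rect n → Rect n → Prop := fun r r' =>
  match r, r' with
  | .inl (i, j), .inl (i', j') =>
      (i = i' ∧ (j' = j + 1 ∨ j = j' + 1)) ∨
      (j = j' ∧ ((i' : ℕ) = (i : ℕ) + 1 ∨ (i : ℕ) = (i' : ℕ) + 1))
  | .inl (i, j), .inr k =>
      (i : ℕ) + 1 = n ∧ (j = (k.val : ZMod (4 * n)) ∨ j = (k.val : ZMod (4 * n)) + 2 * n)
  | .inr k, .inl (i, j) =>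
      (i : ℕ) + 1 = n ∧ (j = (k.val : ZMod (4 * n)) ∨ j = (k.val : ZMod (4 * n)) + 2 * n)
  | .inr k, .inr k' => k' = k + 1 ∨ k = k' + 1

/-- A set of rectangles is "mutually distant" if no two distinct rectangles in
it share a common edge. -/
def MutuallyDistant (n : ℕ) [NeZero n] (S : Finset (Rect n)) : Prop :=
  ∀ r ∈ S, ∀ r' ∈ S, r ≠ r' → ¬ Neighbored n r r'

/-! Colour the inner rectangle `(i, j)` by `i + j` and the outer rectangle `k` by `n + k`, modulo 2.
Neighbouring rectangles get different colours, and rotating every rectangle by one position is a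
bijection exchanging the colours, so both colour classes have `2n² + n` elements. The rectangles
form a connected graph, and along any walk a proper 2-colouring alternates, so a connected graph
has only one 2-colouring up to swapping the colours: any split into two mutually distant sets is
the colour partition. -/

open Finset

namespace SimpleGraph

variable {V : Type*} {G : SimpleGraph V}

theorem Coloring.apply_eq_add_length (c : G.Coloring (ZMod 2)) {u v : V} (p : G.Walk u v) :
    c v = c u + p.length := by
  induction p with
  | nil => simp
  | @cons u v w h p ih =>
    have huv : c v = c u + 1 := by
      have := c.valid h
      generalize c u = a at this ⊢
      generalize c v = b at this ⊢
      revert a b; decide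
    rw [ih, huv, Walk.length_cons]
    push_cast
    ring

theorem Connected.coloring_sub_eq (hG : G.Connected) (c c' : G.Coloring (ZMod 2)) (u v : V) :
    c v - c' v = c u - c' u := by
  obtain ⟨p⟩ := hG u v
  rw [c.apply_eq_add_length p, c'.apply_eq_add_length p]
  ring

theorem Connected.eq_colorClass_of_isIndepSet_compl (hG : G.Connected) (c : G.Coloring (ZMod 2))
    {S : Set V} (hS : G.IsIndepSet S) (hSc : G.IsIndepSet Sᶜ) :
    S = c.colorClass 0 ∨ S = c.colorClass 1 := by
  classical
  let χ : G.Coloring (ZMod 2) := Coloring.mk (fun v => if v ∈ S then 0 else 1) fun {v w} h => by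
    by_cases hv : v ∈ S <;> by_cases hw : w ∈ S <;> simp only [hv, hw, if_true, if_false]
    · exact (hS hv hw h.ne h).elim
    · decide
    · decide
    · exact (hSc hv hw h.ne h).elim
  have hχ (v : V) : v ∈ S ↔ χ v = 0 := by
    change _ ↔ (if v ∈ S then 0 else 1) = 0
    by_cases hv : v ∈ S <;> simp [hv]
  obtain ⟨u⟩ := hG.nonempty
  have hdiff (v : V) := hG.coloring_sub_eq χ c u v
  generalize χ u - c u = d at hdiff
  have hmem (v : V) : v ∈ S ↔ c v + d = 0 := by rw [hχ, ← hdiff v, add_sub_cancel]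
  obtain rfl | rfl : d = 0 ∨ d = 1 := (by decide : ∀ d : ZMod 2, d = 0 ∨ d = 1) d
  · left; ext v; simp [hmem, Coloring.colorClass]
  · right; ext v
    change _ ↔ c v = 1
    rw [hmem]
    generalize c v = a
    revert a; decide

end SimpleGraph

theorem Finset.card_filter_eq_zero_eq_card_filter_eq_one {V : Type*} [Fintype V] {c : V → ZMod 2}
    (e : V ≃ V) (he : ∀ v, c (e v) = c v + 1) :
    #(univ.filter (c · = 0)) = #(univ.filter (c · = 1)) :=
  Finset.card_equiv e fun v => by simp [he]

namespace Rect

variable {n : ℕ}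

def parity (n : ℕ) : Rect n → ZMod 2
  | .inl (i, j) => (i : ℕ) + ZMod.castHom (show 2 ∣ 4 * n by omega) (ZMod 2) j
  | .inr k => n + ZMod.castHom (show 2 ∣ 2 * n by omega) (ZMod 2) k

theorem parity_add_parity_of_inl_inr [NeZero n] {i : Fin n} {j : ZMod (4 * n)} {k : ZMod (2 * n)}
    (hi : (i : ℕ) + 1 = n)
    (hj : j = (k.val : ZMod (4 * n)) ∨ j = (k.val : ZMod (4 * n)) + 2 * n) :
    parity n (.inl (i, j)) + parity n (.inr k) = 1 := by
  have hk : ZMod.castHom (show 2 ∣ 2 * n by omega) (ZMod 2) k = k.val := ZMod.cast_eq_val k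
  rcases hj with rfl | rfl <;>
    simp only [parity, map_add, map_mul, map_natCast, map_ofNat, hk, ← hi, Nat.cast_add,
      Nat.cast_one] <;>
    ring_nf <;> reduce_mod_char

theorem parity_add_parity_of_neighbored [NeZero n] {r r' : Rect n} (h : Neighbored n r r') :
    parity n r + parity n r' = 1 := by
  match r, r', h with
  | .inl (i, j), .inl (i', j'), h =>
    rcases h with ⟨rfl, rfl | rfl⟩ | ⟨rfl, hi | hi⟩ <;>
      simp only [parity, map_add, map_one, Nat.cast_add, Nat.cast_one, *] <;>
      ring_nf <;> reduce_mod_char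
  | .inl (_, _), .inr _, ⟨hi, hj⟩ => exact parity_add_parity_of_inl_inr hi hj
  | .inr _, .inl (_, _), ⟨hi, hj⟩ =>
    exact (add_comm _ _).trans (parity_add_parity_of_inl_inr hi hj)
  | .inr k, .inr k', h =>
    rcases h with rfl | rfl <;> simp only [parity, map_add, map_one] <;> ring_nf <;> reduce_mod_char

theorem parity_ne_of_neighbored [NeZero n] {r r' : Rect n} (h : Neighbored n r r') :
    parity n r ≠ parity n r' := fun heq => by
  simpa [heq, CharTwo.add_self_eq_zero] using parity_add_parity_of_neighbored h

def graph (n : ℕ) : SimpleGraph (Rect n) := SimpleGraph.fromRel (Neighbored n)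

theorem graph_adj_of_neighbored [NeZero n] {r r' : Rect n} (h : Neighbored n r r') :
    (graph n).Adj r r' :=
  (SimpleGraph.fromRel_adj _ _ _).mpr
    ⟨fun heq => parity_ne_of_neighbored h (congrArg _ heq), .inl h⟩

def coloring (n : ℕ) [NeZero n] : (graph n).Coloring (ZMod 2) :=
  SimpleGraph.Coloring.mk (parity n) fun h => by
    obtain ⟨-, h | h⟩ := (SimpleGraph.fromRel_adj _ _ _).mp h
    exacts [parity_ne_of_neighbored h, (parity_ne_of_neighbored h).symm]

theorem exists_eq_val_or_eq_val_add [NeZero n] (j : ZMod (4 * n)) :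
    ∃ k : ZMod (2 * n), j = (k.val : ZMod (4 * n)) ∨ j = (k.val : ZMod (4 * n)) + 2 * n := by
  have hj := Nat.mod_add_div j.val (2 * n)
  have hlt : j.val / (2 * n) < 2 := Nat.div_lt_of_lt_mul (by have := j.val_lt; lia)
  refine ⟨j.val, ?_⟩
  rw [ZMod.val_natCast]
  obtain hq | hq : j.val / (2 * n) = 0 ∨ j.val / (2 * n) = 1 := by lia
  · left
    conv_lhs => rw [← ZMod.natCast_zmod_val j]
    congr 1
    lia
  · right
    conv_lhs => rw [← ZMod.natCast_zmod_val j, ← hj, hq]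
    push_cast
    ring

theorem reachable_inr [NeZero n] (k : ZMod (2 * n)) :
    (graph n).Reachable (.inr 0) (.inr k) := by
  suffices ∀ m : ℕ, (graph n).Reachable (.inr 0) (.inr (m : ZMod (2 * n))) by
    simpa using this k.val
  intro m
  induction m with
  | zero => rw [Nat.cast_zero]; exact .refl _
  | succ m ih =>
    exact ih.trans (graph_adj_of_neighbored (r := .inr _) (r' := .inr _)
      (Or.inl (Nat.cast_succ m))).reachable

theorem reachable_inl [NeZero n] (t : ℕ) (i : Fin n) (j : ZMod (4 * n))
    (ht : (i : ℕ) + 1 + t = n) :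
    (graph n).Reachable (.inr 0) (.inl (i, j)) := by
  induction t generalizing i with
  | zero =>
    obtain ⟨k, hk⟩ := exists_eq_val_or_eq_val_add j
    exact (reachable_inr k).trans
      (graph_adj_of_neighbored (r := .inr k) (r' := .inl (i, j)) ⟨ht, hk⟩).reachable
  | succ t ih =>
    have hi : (i : ℕ) + 1 < n := by lia
    exact (ih ⟨i + 1, hi⟩ (by simp only; lia)).trans
      (graph_adj_of_neighbored (r := .inl (⟨i + 1, hi⟩, j)) (r' := .inl (i, j))
        (Or.inr ⟨rfl, Or.inr rfl⟩)).reachable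

theorem graph_connected [NeZero n] : (graph n).Connected :=
  (SimpleGraph.connected_iff_exists_forall_reachable _).mpr ⟨.inr 0, fun
    | .inl (i, j) => reachable_inl (n - 1 - i) i j (by lia)
    | .inr k => reachable_inr k⟩

theorem mutuallyDistant_iff_isIndepSet [NeZero n] {S : Finset (Rect n)} :
    MutuallyDistant n S ↔ (graph n).IsIndepSet (S : Set (Rect n)) := by
  constructor
  · intro h r hr r' hr' hne hadj
    obtain ⟨-, hN | hN⟩ := (SimpleGraph.fromRel_adj _ _ _).mp hadj
    exacts [h r hr r' hr' hne hN, h r' hr' r hr hne.symm hN]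
  · intro h r hr r' hr' hne hN
    exact h hr hr' hne (graph_adj_of_neighbored hN)

theorem coe_filter_parity_eq_colorClass [NeZero n] (a : ZMod 2) :
    ((univ.filter (parity n · = a) : Finset (Rect n)) : Set (Rect n)) =
      (coloring n).colorClass a := by
  ext r
  simp only [coe_filter, mem_univ, true_and]
  rfl

def shift (n : ℕ) : Rect n ≃ Rect n :=
  Equiv.sumCongr (Equiv.prodCongr (Equiv.refl _) (Equiv.addRight 1)) (Equiv.addRight 1)

theorem parity_shift (r : Rect n) : parity n (shift n r) = parity n r + 1 := by
  rcases r with ⟨i, j⟩ | k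
  · change parity n (.inl (i, j + 1)) = _
    simp only [parity, map_add, map_one, add_assoc]
  · change parity n (.inr (k + 1)) = _
    simp only [parity, map_add, map_one, add_assoc]

theorem card_eq [NeZero n] : Fintype.card (Rect n) = 4 * n ^ 2 + 2 * n := by
  simp only [Rect, Fintype.card_sum, Fintype.card_prod, Fintype.card_fin, ZMod.card]
  ring

end Rect

/-- The `4n² + 2n` rectangles of `R_n` split into two sets `S` and `Sᶜ`, each
of `2n² + n` mutually distant rectangles, and this partition is unique (hence
independent of the choice of the starting rectangle). -/
theorem rectangles_two_coloring (n : ℕ) [NeZero n] :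
    ∃ S : Finset (Rect n),
      S.card = 2 * n ^ 2 + n ∧ Sᶜ.card = 2 * n ^ 2 + n ∧
      MutuallyDistant n S ∧ MutuallyDistant n Sᶜ ∧
      ∀ S' : Finset (Rect n),
        S'.card = 2 * n ^ 2 + n → MutuallyDistant n S' → MutuallyDistant n S'ᶜ →
          S' = S ∨ S' = Sᶜ := by
  set S : Finset (Rect n) := univ.filter (Rect.parity n · = 0)
  have hSc : Sᶜ = univ.filter (Rect.parity n · = 1) := by
    ext r
    simp only [S, mem_compl, mem_filter, mem_univ, true_and]
    generalize Rect.parity n r = a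
    revert a; decide
  have hcard : #S = #Sᶜ :=
    hSc ▸ card_filter_eq_zero_eq_card_filter_eq_one (Rect.shift n) Rect.parity_shift
  have htotal : #S + #Sᶜ = 4 * n ^ 2 + 2 * n := by
    rw [card_add_card_compl, Rect.card_eq]
  refine ⟨S, by lia, by lia, ?_, ?_, fun S' _ hS' hS'c => ?_⟩
  · rw [Rect.mutuallyDistant_iff_isIndepSet, Rect.coe_filter_parity_eq_colorClass]
    exact (Rect.coloring n).isIndepSet_colorClass 0
  · rw [Rect.mutuallyDistant_iff_isIndepSet, hSc, Rect.coe_filter_parity_eq_colorClass]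
    exact (Rect.coloring n).isIndepSet_colorClass 1
  rw [Rect.mutuallyDistant_iff_isIndepSet] at hS' hS'c
  rw [coe_compl] at hS'c
  rcases Rect.graph_connected.eq_colorClass_of_isIndepSet_compl (Rect.coloring n) hS' hS'c
    with h | h
  · exact .inl (coe_injective (h.trans (Rect.coe_filter_parity_eq_colorClass 0).symm))
  · exact .inr (hSc ▸ coe_injective (h.trans (Rect.coe_filter_parity_eq_colorClass 1).symm))
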